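/- Let T be a two-row increasing tableau with lattice word w = w_1…w_q over subsets of {1,2}, with w_1 ≠ ∅, having first balance point j_b preceded by a teetering point, with j_t the first teetering point. Then the lattice word of the K-promotion of T is obtained from w by changing w_{j_t} from {1,2} to {1}, changing w_{j_b} from {2} to {1,2}, deleting the first letter, and appending {2} at the end. -/

import Mathlib

open Classical

/-- A cell `(row, col)` (0-indexed) of a Young diagram. -/
abbrev Cell : Type := ℕ × ℕ

/-- The cell `c` lies in the Young diagram of the shape `lam`. -/
def inShape (lam : List ℕ) (c : Cell) : Prop := c.2 < lam.getD c.1 0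

/-- `lam` is an integer partition (weakly decreasing list of positive parts). -/
def IsPartition (lam : List ℕ) : Prop :=
  lam.Pairwise (· ≥ ·) ∧ ∀ x ∈ lam, 0 < x

/-- An increasing tableau of shape `lam` with entries in `{1,…,q}`
(rows and columns strictly increase); cells outside the shape carry `0`. -/
structure IncTab (lam : List ℕ) (q : ℕ) where
  entry : Cell → ℕ
  entry_pos : ∀ c, inShape lam c → 1 ≤ entry c
  entry_le : ∀ c, inShape lam c → entry c ≤ q
  row_strict : ∀ i j : ℕ, inShape lam (i, j + 1) → entry (i, j) < entry (i, j + 1)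
  col_strict : ∀ i j : ℕ, inShape lam (i + 1, j) → entry (i, j) < entry (i + 1, j)
  zero_outside : ∀ c, ¬ inShape lam c → entry c = 0

/-- A standard Young tableau: a bijective filling by `1, …, n` where `n = |lam|`. -/
def IsStandard (lam : List ℕ) (n : ℕ) (T : IncTab lam n) : Prop :=
  n = lam.sum ∧ ∀ v, 1 ≤ v → v ≤ n → ∃! c, inShape lam c ∧ T.entry c = v

/-- Every value of `{1,…,q}` appears in the tableau. -/
def Packed (lam : List ℕ) (q : ℕ) (T : IncTab lam q) : Prop :=
  ∀ v, 1 ≤ v → v ≤ q → ∃ c : Cell, inShape lam c ∧ T.entry c = v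

/-- During (K-)gromotion, a vacated box is recorded by the value `0` (a "bullet"). -/
def isBullet (lam : List ℕ) (f : Cell → ℕ) (c : Cell) : Prop :=
  inShape lam c ∧ f c = 0

/-- `c` carries value `v` and is adjacent (on its left or above) to a bullet box. -/
def inC (lam : List ℕ) (f : Cell → ℕ) (v : ℕ) (c : Cell) : Prop :=
  inShape lam c ∧ f c = v ∧
    ((1 ≤ c.2 ∧ isBullet lam f (c.1, c.2 - 1)) ∨ (1 ≤ c.1 ∧ isBullet lam f (c.1 - 1, c.2)))

/-- One K-jeu-de-taquin substep: simultaneously all boxes with value `v` adjacent to a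
bullet become bullets, and the bullets adjacent to them receive value `v`. -/
noncomputable def substep (lam : List ℕ) (v : ℕ) (f : Cell → ℕ) : Cell → ℕ :=
  fun c =>
    if inC lam f v c then 0
    else if isBullet lam f c ∧ (inC lam f v (c.1, c.2 + 1) ∨ inC lam f v (c.1 + 1, c.2)) then v
    else f c

/-- The `j`-th value of the cyclically shifted alphabet `(α < α+1 < … < q < 1 < … < α-1)`. -/
def cyc (q α j : ℕ) : ℕ := (α - 1 + j) % q + 1

/-- State of the gromotion slide (at stage `α` of the alphabet cycle) after `j` substeps;
the base case deletes the minimal letter `α` from the upper-left corner. -/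
noncomputable def iterSub (lam : List ℕ) (q α : ℕ) (f : Cell → ℕ) : ℕ → Cell → ℕ
  | 0 => fun c => if c = ((0, 0) : Cell) ∧ f c = α then 0 else f c
  | j + 1 => substep lam (cyc q α (j + 1)) (iterSub lam q α f j)

/-- One application of (K-)gromotion at stage `α`: slide, then fill the vacated boxes
with the removed letter `α` (now maximal in the cycled alphabet). -/
noncomputable def gromote (lam : List ℕ) (q α : ℕ) (f : Cell → ℕ) : Cell → ℕ :=
  fun c =>
    if inShape lam c ∧ iterSub lam q α f (q - 1) c = 0 then α
    else iterSub lam q α f (q - 1) c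

/-- The `k`-th iterate of (K-)gromotion (stages cycle through `1, …, q`). -/
noncomputable def gromIter (lam : List ℕ) (q : ℕ) (f : Cell → ℕ) : ℕ → Cell → ℕ
  | 0 => f
  | k + 1 => gromote lam q (k % q + 1) (gromIter lam q f k)

/-- In state `f`, the value `v` is about to move from row `i+1` to row `i` (1-indexed):
a bullet in (1-indexed) row `i` has the box below it about to slide up with value `v`. -/
def moveAt (lam : List ℕ) (f : Cell → ℕ) (v i : ℕ) : Prop :=
  ∃ c : Cell, isBullet lam f c ∧ c.1 + 1 = i ∧ inC lam f v (c.1 + 1, c.2)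

/-- Edge `α → β` of the `i`-th promotion digraph `prom_i(T)`:
during the `α`-th application of (K-)gromotion, value `β` moves from row `i+1` to row `i`. -/
def promEdge (lam : List ℕ) (q i : ℕ) (T : IncTab lam q) (α β : ℕ) : Prop :=
  1 ≤ α ∧ α ≤ q ∧
  ∃ j : ℕ, j + 1 ≤ q - 1 ∧ cyc q α (j + 1) = β ∧
    moveAt lam (iterSub lam q α (gromIter lam q T.entry (α - 1)) j) β i

/-- (K-)promotion: gromotion at stage `1` followed by the relabeling `v ↦ v - 1`,
with the removed letter (temporarily `1`) becoming `q`. -/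
noncomputable def kpromote (lam : List ℕ) (q : ℕ) (f : Cell → ℕ) : Cell → ℕ :=
  fun c =>
    if inShape lam c then
      (if gromote lam q 1 f c = 1 then q else gromote lam q 1 f c - 1)
    else 0

/-- Value `v` appears in (1-indexed) row `r` of the filling `f`. -/
def appearsRow (lam : List ℕ) (f : Cell → ℕ) (r v : ℕ) : Prop :=
  1 ≤ r ∧ ∃ j : ℕ, inShape lam (r - 1, j) ∧ f (r - 1, j) = v

/-- The letter of the lattice word at position `v`: the set of (1-indexed) rows
containing value `v`. -/
def rowSetW (lam : List ℕ) (f : Cell → ℕ) (v : ℕ) : Set ℕ :=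
  {r | appearsRow lam f r v}

/-- For a standard filling: the (1-indexed) row containing value `v`. -/
noncomputable def latticeRow (lam : List ℕ) (f : Cell → ℕ) (v : ℕ) : ℕ :=
  sInf {r | appearsRow lam f r v}

/-- Number of occurrences of letter `r` among the first `j` letters of the lattice word:
the number of values `v ≤ j` appearing in row `r`. -/
noncomputable def cnt (lam : List ℕ) (f : Cell → ℕ) (r j : ℕ) : ℕ :=
  ((Finset.Icc 1 j).filter fun v => appearsRow lam f r v).card

/-- `j` is a (1-)balance point of the lattice word of a two-row filling. -/
def isBalance (lam : List ℕ) (f : Cell → ℕ) (j : ℕ) : Prop :=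
  cnt lam f 1 j = cnt lam f 2 j

/-- `j` is a (1-)teetering point of the lattice word of a two-row filling. -/
def isTeeter (lam : List ℕ) (f : Cell → ℕ) (j : ℕ) : Prop :=
  appearsRow lam f 1 j ∧ appearsRow lam f 2 j ∧ cnt lam f 1 j = cnt lam f 2 j + 1

/-- A noncrossing perfect matching of `{1,…,n}`, as a symmetric relation. -/
def IsNCMatching (n : ℕ) (M : ℕ → ℕ → Prop) : Prop :=
  (∀ a b, M a b → 1 ≤ a ∧ a ≤ n ∧ 1 ≤ b ∧ b ≤ n ∧ a ≠ b) ∧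
  (∀ a b, M a b → M b a) ∧
  (∀ a, 1 ≤ a → a ≤ n → ∃! b, M a b) ∧
  (∀ a b x y, M a x → M b y → ¬ (a < b ∧ b < x ∧ x < y))

/-- Number of occurrences of letter `r` among positions `a, …, b` of the lattice word
of a standard two-row filling. -/
noncomputable def letterCnt (lam : List ℕ) (f : Cell → ℕ) (r a b : ℕ) : ℕ :=
  ((Finset.Icc a b).filter fun p => latticeRow lam f p = r).card

/-- Positions `a < b` are matched in the noncrossing matching of the lattice word:
`w_a = 1`, `w_b = 2`, the interval `[a,b]` is balanced, and every proper prefix of it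
has strictly more `1`s than `2`s (i.e. `b` is the nearest available `2` for `a`). -/
def matchRel (lam : List ℕ) (f : Cell → ℕ) (a b : ℕ) : Prop :=
  a < b ∧ latticeRow lam f a = 1 ∧ latticeRow lam f b = 2 ∧
  letterCnt lam f 1 a b = letterCnt lam f 2 a b ∧
  ∀ m, a ≤ m → m < b → letterCnt lam f 2 a m < letterCnt lam f 1 a m

/-- The (symmetrized) noncrossing matching associated to a two-row standard filling. -/
def symMatch (lam : List ℕ) (f : Cell → ℕ) (a b : ℕ) : Prop :=
  matchRel lam f a b ∨ matchRel lam f b a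

/-- A noncrossing set partition of `{1,…,q}`, encoded by its "same block" relation. -/
def IsNCPartition (q : ℕ) (R : ℕ → ℕ → Prop) : Prop :=
  (∀ a b, R a b → 1 ≤ a ∧ a ≤ q ∧ 1 ≤ b ∧ b ≤ q) ∧
  (∀ a, 1 ≤ a → a ≤ q → R a a) ∧
  (∀ a b, R a b → R b a) ∧
  (∀ a b c, R a b → R b c → R a c) ∧
  (∀ a b x y, a < x → x < b → b < y → R a b → R x y → R a x)

/-- The defining compatibility between a two-row increasing tableau (given by its
filling `f`) and its noncrossing set partition `R` (Pechenik): singleton blocks are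
the absent values; least elements of nontrivial blocks are the values appearing only
in the top row; greatest elements are the values appearing only in the bottom row;
middle elements are the values appearing in both rows. -/
def BlockCompat (lam : List ℕ) (q : ℕ) (f : Cell → ℕ) (R : ℕ → ℕ → Prop) : Prop :=
  ∀ v, 1 ≤ v → v ≤ q →
    ((∀ u, R v u → u = v) ↔ ¬ ∃ c : Cell, inShape lam c ∧ f c = v) ∧
    (((∃ u, R v u ∧ v < u) ∧ ∀ u, R v u → v ≤ u) ↔
      (appearsRow lam f 1 v ∧ ¬ appearsRow lam f 2 v)) ∧
    (((∃ u, R v u ∧ u < v) ∧ ∀ u, R v u → u ≤ v) ↔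
      (appearsRow lam f 2 v ∧ ¬ appearsRow lam f 1 v)) ∧
    (((∃ u, R v u ∧ u < v) ∧ (∃ u, R v u ∧ v < u)) ↔
      (appearsRow lam f 1 v ∧ appearsRow lam f 2 v))

/-!
Write `A v`, `B v` for the numbers of entries `≤ v` in the two rows. Promotion deletes the `1`
in the corner and slides the hole through the values `2, 3, …, q`. While the top row strictly leads
(`B v < A v`, i.e. before the first balance point) the hole sits in the top row at column `A v - 1`,
since the box below it holds a smaller value. At the first teetering point `jt` the value `jt`
lies both to the right of and below the hole, so K-jeu-de-taquin splits it into one hole per row.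
At the first balance point `jb` the value `jb`, which lies only in the bottom row, sits below the
top hole and to the right of the bottom hole: the two holes merge and the top one is filled by `jb`.
Afterwards only the bottom hole moves, to the end of the bottom row, where it receives `q`.
Decrementing all values then gives the stated lattice word.
-/

open Finset

section Counting

variable {lam : List ℕ} {f : Cell → ℕ} {r v : ℕ}

theorem cnt_zero : cnt lam f r 0 = 0 := by
  simp [cnt]

theorem cnt_succ :
    cnt lam f r (v + 1) = cnt lam f r v + if appearsRow lam f r (v + 1) then 1 else 0 := by
  have hIcc : Icc 1 (v + 1) = insert (v + 1) (Icc 1 v) := by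
    ext x; simp only [mem_Icc, mem_insert]; omega
  unfold cnt
  rw [hIcc, filter_insert]
  split_ifs
  · rw [card_insert_of_notMem (by simp)]
  · rfl

theorem cnt_mono : Monotone (cnt lam f r) := fun _ _ h =>
  card_le_card (filter_subset_filter _ (Icc_subset_Icc_right h))

theorem cnt_succ_of_appearsRow (h : appearsRow lam f r (v + 1)) :
    cnt lam f r (v + 1) = cnt lam f r v + 1 := by
  rw [cnt_succ, if_pos h]

theorem cnt_succ_of_not_appearsRow (h : ¬ appearsRow lam f r (v + 1)) :
    cnt lam f r (v + 1) = cnt lam f r v := by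
  rw [cnt_succ, if_neg h, add_zero]

theorem cnt_succ_le : cnt lam f r (v + 1) ≤ cnt lam f r v + 1 := by
  rw [cnt_succ]; split_ifs <;> omega

theorem appearsRow_succ_iff :
    appearsRow lam f r (v + 1) ↔ cnt lam f r v < cnt lam f r (v + 1) := by
  rw [cnt_succ]; split_ifs with h <;> simp [h]

theorem cnt_pos_of_appearsRow (hv : 1 ≤ v) (h : appearsRow lam f r v) : 0 < cnt lam f r v := by
  obtain ⟨u, rfl⟩ := Nat.exists_eq_add_of_le' hv
  exact Nat.zero_lt_of_lt (appearsRow_succ_iff.mp h)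

end Counting

theorem inShape_of_le {lam : List ℕ} {i j k : ℕ} (h : j ≤ k) (hk : inShape lam (i, k)) :
    inShape lam (i, j) :=
  lt_of_le_of_lt h hk

namespace IncTab

variable {lam : List ℕ} {q : ℕ} (T : IncTab lam q)

theorem entry_lt_entry {i j k : ℕ} (h : j < k) (hk : inShape lam (i, k)) :
    T.entry (i, j) < T.entry (i, k) := by
  induction k with
  | zero => omega
  | succ k ih =>
    rcases Nat.lt_succ_iff_lt_or_eq.mp h with h | rfl
    · exact (ih h (inShape_of_le k.le_succ hk)).trans (T.row_strict i k hk)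
    · exact T.row_strict i j hk

theorem entry_le_entry {i j k : ℕ} (h : j ≤ k) (hk : inShape lam (i, k)) :
    T.entry (i, j) ≤ T.entry (i, k) := by
  rcases h.lt_or_eq with h | rfl
  · exact (T.entry_lt_entry h hk).le
  · rfl

theorem cnt_eq_card (i v : ℕ) :
    cnt lam T.entry (i + 1) v = #{j ∈ range (lam.getD i 0) | T.entry (i, j) ≤ v} := by
  refine (card_bij (fun j _ => T.entry (i, j)) ?_ ?_ ?_).symm
  · intro j hj
    simp only [mem_filter, mem_range] at hj
    simp only [mem_filter, mem_Icc]
    exact ⟨⟨T.entry_pos _ hj.1, hj.2⟩, i.succ_pos, j, by simpa [inShape] using hj.1, rfl⟩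
  · intro j hj k hk hjk
    simp only [mem_filter, mem_range] at hj hk
    by_contra hne
    rcases Nat.lt_or_gt_of_ne hne with h | h
    · exact (T.entry_lt_entry h hk.1).ne hjk
    · exact (T.entry_lt_entry h hj.1).ne' hjk
  · intro u hu
    simp only [mem_filter, mem_Icc] at hu
    obtain ⟨⟨-, huv⟩, -, j, hsh, rfl⟩ := hu
    exact ⟨j, by simpa [inShape] using ⟨hsh, huv⟩, rfl⟩

theorem entry_le_iff_lt_cnt {i j v : ℕ} (hj : j < lam.getD i 0) :
    T.entry (i, j) ≤ v ↔ j < cnt lam T.entry (i + 1) v := by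
  rw [cnt_eq_card]
  constructor
  · intro hle
    have hsub : range (j + 1) ⊆ {j' ∈ range (lam.getD i 0) | T.entry (i, j') ≤ v} := by
      intro j' hj'
      simp only [mem_range] at hj'
      simp only [mem_filter, mem_range]
      exact ⟨by omega, (T.entry_le_entry (Nat.lt_succ_iff.mp hj') hj).trans hle⟩
    simpa using card_le_card hsub
  · intro hlt
    by_contra hgt
    have hsub : {j' ∈ range (lam.getD i 0) | T.entry (i, j') ≤ v} ⊆ range j := by
      intro j' hj'
      simp only [mem_filter, mem_range] at hj' ⊢
      by_contra hge
      exact hgt ((T.entry_le_entry (not_lt.mp hge) hj'.1).trans hj'.2)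
    simpa using (card_le_card hsub).trans_lt' hlt

theorem cnt_le_length (i v : ℕ) : cnt lam T.entry (i + 1) v ≤ lam.getD i 0 := by
  rw [cnt_eq_card]
  exact (card_filter_le _ _).trans (card_range _).le

theorem entry_eq_iff {i j v : ℕ} (hv : 1 ≤ v) (hj : j < lam.getD i 0) :
    T.entry (i, j) = v ↔
      cnt lam T.entry (i + 1) (v - 1) ≤ j ∧ j < cnt lam T.entry (i + 1) v := by
  have := T.entry_le_iff_lt_cnt (v := v) hj
  have := T.entry_le_iff_lt_cnt (v := v - 1) hj
  omega

end IncTab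

section TwoRow

variable {l1 l2 : ℕ}

theorem inShape_pair_iff {i j : ℕ} :
    inShape [l1, l2] (i, j) ↔ i = 0 ∧ j < l1 ∨ i = 1 ∧ j < l2 := by
  rcases i with _ | _ | i <;> simp [inShape]

@[simp] theorem inShape_pair_zero_iff {j : ℕ} : inShape [l1, l2] (0, j) ↔ j < l1 := Iff.rfl

@[simp] theorem inShape_pair_one_iff {j : ℕ} : inShape [l1, l2] (1, j) ↔ j < l2 := Iff.rfl

theorem appearsRow_pair_one_iff {f : Cell → ℕ} {v : ℕ} :
    appearsRow [l1, l2] f 1 v ↔ ∃ j < l1, f (0, j) = v := by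
  simp [appearsRow, inShape_pair_iff]

theorem appearsRow_pair_two_iff {f : Cell → ℕ} {v : ℕ} :
    appearsRow [l1, l2] f 2 v ↔ ∃ j < l2, f (1, j) = v := by
  simp [appearsRow, inShape_pair_iff]

theorem eq_one_or_eq_two_of_appearsRow_pair {f : Cell → ℕ} {r v : ℕ}
    (h : appearsRow [l1, l2] f r v) : r = 1 ∨ r = 2 := by
  obtain ⟨hr, j, hsh, -⟩ := h
  rw [inShape_pair_iff] at hsh
  omega

theorem rowSetW_pair_subset {f : Cell → ℕ} {v : ℕ} : rowSetW [l1, l2] f v ⊆ {1, 2} :=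
  fun _ hr => eq_one_or_eq_two_of_appearsRow_pair hr

theorem rowSetW_pair_eq {f : Cell → ℕ} {v : ℕ} {s : Set ℕ} (hs : s ⊆ {1, 2})
    (h1 : appearsRow [l1, l2] f 1 v ↔ 1 ∈ s) (h2 : appearsRow [l1, l2] f 2 v ↔ 2 ∈ s) :
    rowSetW [l1, l2] f v = s := by
  ext r
  constructor
  · intro hr
    rcases eq_one_or_eq_two_of_appearsRow_pair hr with rfl | rfl
    exacts [h1.mp hr, h2.mp hr]
  · intro hr
    rcases hs hr with rfl | rfl
    exacts [h1.mpr hr, h2.mpr hr]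

variable {q : ℕ} (T : IncTab [l1, l2] q)

theorem IncTab.cnt_two_le_cnt_one (hll : l2 ≤ l1) (v : ℕ) :
    cnt [l1, l2] T.entry 2 v ≤ cnt [l1, l2] T.entry 1 v := by
  rw [T.cnt_eq_card 1, T.cnt_eq_card 0]
  refine card_le_card fun j hj => ?_
  simp only [mem_filter, mem_range, List.getD_cons_succ, List.getD_cons_zero] at hj ⊢
  have : T.entry (0, j) < T.entry (1, j) := T.col_strict 0 j hj.1
  omega

theorem IncTab.one_lt_entry (hll : l2 ≤ l1) {c : Cell} (hc : inShape [l1, l2] c)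
    (hc0 : c ≠ (0, 0)) : 1 < T.entry c := by
  obtain ⟨i, j⟩ := c
  rcases inShape_pair_iff.mp hc with ⟨rfl, hj⟩ | ⟨rfl, hj⟩
  · have hj0 : 0 < j := Nat.pos_of_ne_zero fun h => hc0 (by rw [h])
    have := T.entry_pos (0, 0) (show 0 < l1 by omega)
    have := T.entry_lt_entry hj0 hc
    omega
  · have := T.entry_pos (0, j) (show j < l1 by omega)
    have : T.entry (0, j) < T.entry (1, j) := T.col_strict 0 j hc
    omega

theorem IncTab.entry_zero_zero_eq_one (hll : l2 ≤ l1)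
    (hw1 : rowSetW [l1, l2] T.entry 1 ≠ ∅) : T.entry (0, 0) = 1 := by
  obtain ⟨r, -, j, hsh, hval⟩ := Set.nonempty_iff_ne_empty.mpr hw1
  by_contra hne
  exact (T.one_lt_entry hll hsh fun h => hne (h ▸ hval)).ne' hval

end TwoRow

structure TeeterBeforeBalance {l1 l2 q : ℕ} (T : IncTab [l1, l2] q) (jt jb : ℕ) : Prop where
  shape_le : l2 ≤ l1
  entry_zero_zero : T.entry (0, 0) = 1
  one_le_jt : 1 ≤ jt
  jt_lt_jb : jt < jb
  jb_le : jb ≤ q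
  teeter : isTeeter [l1, l2] T.entry jt
  not_teeter : ∀ m, 1 ≤ m → m < jt → ¬ isTeeter [l1, l2] T.entry m
  balance : isBalance [l1, l2] T.entry jb
  -- given `l2 ≤ l1`, this says that `jb` is the first balance point
  cnt_two_lt_cnt_one :
    ∀ m, 1 ≤ m → m < jb → cnt [l1, l2] T.entry 2 m < cnt [l1, l2] T.entry 1 m

/-- The filling after the slide has processed the values `2, …, v`, with `0` marking the holes:
the top row is shifted left up to a hole in column `A v - 1`, frozen from `jb` on with that box
filled by `jb`; from `jt` on, the bottom row is shifted left from column `B jt - 1` up to a hole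
in column `B v - 1`. -/
noncomputable def slideState {l1 l2 q : ℕ} (T : IncTab [l1, l2] q) (jt jb v : ℕ) : Cell → ℕ
  | (0, j) =>
      if j + 1 < cnt [l1, l2] T.entry 1 (min v jb) then T.entry (0, j + 1)
      else if j + 1 = cnt [l1, l2] T.entry 1 (min v jb) then (if v < jb then 0 else jb)
      else T.entry (0, j)
  | (1, j) =>
      if v < jt ∨ j + 1 < cnt [l1, l2] T.entry 2 jt then T.entry (1, j)
      else if j + 1 < cnt [l1, l2] T.entry 2 v then T.entry (1, j + 1)
      else if j + 1 = cnt [l1, l2] T.entry 2 v then 0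
      else T.entry (1, j)
  | c => T.entry c

section Promotion

variable {l1 l2 q : ℕ} {T : IncTab [l1, l2] q} {jt jb : ℕ}

local notation "A" => cnt [l1, l2] T.entry 1
local notation "B" => cnt [l1, l2] T.entry 2

theorem TeeterBeforeBalance.zero_lt_l1 (h : TeeterBeforeBalance T jt jb) : 0 < l1 := by
  by_contra hl1
  have := T.zero_outside (0, 0) (by simpa using hl1)
  rw [h.entry_zero_zero] at this
  exact one_ne_zero this

theorem TeeterBeforeBalance.cnt_one_one (h : TeeterBeforeBalance T jt jb) : A 1 = 1 := by
  rw [cnt_succ_of_appearsRow (appearsRow_pair_one_iff.mpr ⟨0, h.zero_lt_l1, h.entry_zero_zero⟩),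
    cnt_zero]

theorem TeeterBeforeBalance.two_le_jt (h : TeeterBeforeBalance T jt jb) : 2 ≤ jt := by
  have hB := cnt_pos_of_appearsRow h.one_le_jt h.teeter.2.1
  have hA := h.teeter.2.2
  by_contra hjt
  obtain rfl : jt = 1 := by have := h.one_le_jt; omega
  have := h.cnt_one_one
  omega

theorem TeeterBeforeBalance.one_le_cnt_two_jt (h : TeeterBeforeBalance T jt jb) : 1 ≤ B jt :=
  cnt_pos_of_appearsRow h.one_le_jt h.teeter.2.1

theorem TeeterBeforeBalance.one_lt_jb (h : TeeterBeforeBalance T jt jb) : 1 < jb :=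
  h.one_le_jt.trans_lt h.jt_lt_jb

theorem TeeterBeforeBalance.not_appearsRow_one_jb (h : TeeterBeforeBalance T jt jb) :
    ¬ appearsRow [l1, l2] T.entry 1 jb := by
  obtain ⟨p, rfl⟩ := Nat.exists_eq_add_of_lt h.one_lt_jb
  intro happ
  have hA := cnt_succ_of_appearsRow happ
  have hB : B (1 + p + 1) ≤ B (1 + p) + 1 := cnt_succ_le
  have hdom := h.cnt_two_lt_cnt_one (1 + p) (by omega) (by omega)
  have hbal : A (1 + p + 1) = B (1 + p + 1) := h.balance
  omega

theorem TeeterBeforeBalance.appearsRow_two_jb (h : TeeterBeforeBalance T jt jb) :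
    appearsRow [l1, l2] T.entry 2 jb := by
  have hA1 := h.not_appearsRow_one_jb
  obtain ⟨p, rfl⟩ := Nat.exists_eq_add_of_lt h.one_lt_jb
  by_contra happ
  have hA := cnt_succ_of_not_appearsRow hA1
  have hB := cnt_succ_of_not_appearsRow happ
  have hdom := h.cnt_two_lt_cnt_one (1 + p) (by omega) (by omega)
  have hbal : A (1 + p + 1) = B (1 + p + 1) := h.balance
  omega

theorem TeeterBeforeBalance.one_le_cnt_one (h : TeeterBeforeBalance T jt jb) {v : ℕ}
    (hv : 1 ≤ v) : 1 ≤ A v :=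
  h.cnt_one_one.symm.le.trans (cnt_mono hv)

theorem TeeterBeforeBalance.cnt_two_lt_cnt_two_jt (h : TeeterBeforeBalance T jt jb) {v : ℕ}
    (hv : v < jt) : B v < B jt := by
  obtain ⟨p, rfl⟩ := Nat.exists_eq_add_of_lt h.one_le_jt
  rw [cnt_succ_of_appearsRow h.teeter.2.1]
  exact Nat.lt_succ_of_le (cnt_mono (by omega))

theorem TeeterBeforeBalance.cnt_one_eq_of_succ_eq_jt (h : TeeterBeforeBalance T jt jb) {v : ℕ}
    (hv : v + 1 = jt) : A v = B v + 1 := by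
  subst hv
  have := h.teeter.2.2
  rw [cnt_succ_of_appearsRow h.teeter.1, cnt_succ_of_appearsRow h.teeter.2.1] at this
  omega

theorem TeeterBeforeBalance.jt_le_succ_of_appearsRow_two (h : TeeterBeforeBalance T jt jb)
    {v : ℕ} (hv : 1 ≤ v) (hvjb : v < jb) (happ : appearsRow [l1, l2] T.entry 2 (v + 1))
    (hcol : B v + 1 = A v) : jt ≤ v + 1 := by
  by_contra! hvjt
  have := h.jt_lt_jb
  have hB := cnt_succ_of_appearsRow happ
  by_cases happ1 : appearsRow [l1, l2] T.entry 1 (v + 1)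
  · have hA := cnt_succ_of_appearsRow happ1
    exact h.not_teeter (v + 1) (by omega) hvjt ⟨happ1, happ, by omega⟩
  · have hA := cnt_succ_of_not_appearsRow happ1
    have := h.cnt_two_lt_cnt_one (v + 1) (by omega) (by omega)
    omega

theorem IncTab.cnt_one_le (v : ℕ) : A v ≤ l1 := T.cnt_le_length 0 v

theorem IncTab.cnt_two_le (v : ℕ) : B v ≤ l2 := T.cnt_le_length 1 v

theorem IncTab.top_entry_eq_succ_iff (j v : ℕ) :
    T.entry (0, j) = v + 1 ↔ A v ≤ j ∧ j < A (v + 1) := by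
  by_cases hj : j < l1
  · simpa using T.entry_eq_iff (i := 0) (v := v + 1) (by omega) hj
  · have := T.cnt_one_le (v + 1)
    have := T.zero_outside (0, j) (by simpa [inShape] using hj)
    omega

theorem IncTab.bottom_entry_eq_succ_iff (j v : ℕ) :
    T.entry (1, j) = v + 1 ↔ B v ≤ j ∧ j < B (v + 1) := by
  by_cases hj : j < l2
  · simpa using T.entry_eq_iff (i := 1) (v := v + 1) (by omega) hj
  · have := T.cnt_two_le (v + 1)
    have := T.zero_outside (1, j) (by simpa [inShape] using hj)
    omega

theorem IncTab.top_entry_pos {j : ℕ} (hj : j < l1) : 0 < T.entry (0, j) := T.entry_pos _ hj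

theorem IncTab.bottom_entry_pos {j : ℕ} (hj : j < l2) : 0 < T.entry (1, j) := T.entry_pos _ hj

theorem not_isBullet_pair {f : Cell → ℕ} {i j : ℕ} (hi : 2 ≤ i) :
    ¬ isBullet [l1, l2] f (i, j) :=
  fun hc => by have := inShape_pair_iff.mp hc.1; omega

theorem not_inC_pair {f : Cell → ℕ} {u i j : ℕ} (hi : 2 ≤ i) : ¬ inC [l1, l2] f u (i, j) :=
  fun hc => by have := inShape_pair_iff.mp hc.1; omega

theorem isBullet_slideState_top_iff (h : TeeterBeforeBalance T jt jb) {v j : ℕ} (hv : 1 ≤ v) :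
    isBullet [l1, l2] (slideState T jt jb v) (0, j) ↔ v < jb ∧ j + 1 = A v := by
  -- Once the relevant facts about the counts are in context, every case is linear arithmetic.
  have := h.one_le_cnt_one hv
  have := h.one_lt_jb
  have := T.cnt_one_le (min v jb)
  have hmin : v < jb → A (min v jb) = A v := fun hvjb => by rw [min_eq_left hvjb.le]
  have hmin' : jb ≤ v → A (min v jb) = A jb := fun hvjb => by rw [min_eq_right hvjb]
  have := fun hj : j < l1 => T.top_entry_pos hj
  have := fun hj : j + 1 < l1 => T.top_entry_pos hj
  simp only [isBullet, slideState, inShape_pair_zero_iff]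
  split_ifs <;> omega

theorem isBullet_slideState_bottom_iff (h : TeeterBeforeBalance T jt jb) {v j : ℕ} :
    isBullet [l1, l2] (slideState T jt jb v) (1, j) ↔ jt ≤ v ∧ j + 1 = B v := by
  have := h.one_le_cnt_two_jt
  have : jt ≤ v → B jt ≤ B v := fun hv => cnt_mono hv
  have := T.cnt_two_le v
  have := fun hj : j < l2 => T.bottom_entry_pos hj
  have := fun hj : j + 1 < l2 => T.bottom_entry_pos hj
  simp only [isBullet, slideState, inShape_pair_one_iff]
  split_ifs <;> omega

theorem inC_slideState_top_iff (h : TeeterBeforeBalance T jt jb) {v j : ℕ} (hv : 1 ≤ v) :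
    inC [l1, l2] (slideState T jt jb v) (v + 1) (0, j) ↔
      appearsRow [l1, l2] T.entry 1 (v + 1) ∧ v < jb ∧ j = A v := by
  have := h.one_lt_jb
  have := h.one_le_cnt_one hv
  have := T.cnt_one_le (v + 1)
  have : A v ≤ A (v + 1) := cnt_mono v.le_succ
  have hmin : v < jb → A (min v jb) = A v := fun hvjb => by rw [min_eq_left hvjb.le]
  have hmin' : jb ≤ v → A (min v jb) = A jb := fun hvjb => by rw [min_eq_right hvjb]
  have := T.top_entry_eq_succ_iff j v
  have := T.top_entry_eq_succ_iff (j + 1) v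
  simp only [inC, isBullet_slideState_top_iff h hv, inShape_pair_zero_iff, slideState,
    appearsRow_succ_iff]
  split_ifs <;> omega

theorem inC_slideState_bottom_iff (h : TeeterBeforeBalance T jt jb) {v j : ℕ} (hv : 1 ≤ v) :
    inC [l1, l2] (slideState T jt jb v) (v + 1) (1, j) ↔
      appearsRow [l1, l2] T.entry 2 (v + 1) ∧ jt ≤ v + 1 ∧ j = B v := by
  have := h.jt_lt_jb
  have := h.one_le_cnt_two_jt
  have := T.cnt_two_le (v + 1)
  have : B v ≤ B (v + 1) := cnt_mono v.le_succ
  have : B (v + 1) ≤ B v + 1 := cnt_succ_le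
  have : jt ≤ v → B jt ≤ B v := fun hjt => cnt_mono hjt
  have : v < jb → B v < A v := h.cnt_two_lt_cnt_one v hv
  have := fun hvjb happ hcol =>
    h.jt_le_succ_of_appearsRow_two hv hvjb (appearsRow_succ_iff.mpr happ) hcol
  have := fun hvjt : v + 1 = jt => h.cnt_one_eq_of_succ_eq_jt hvjt
  have := T.bottom_entry_eq_succ_iff j v
  have := T.bottom_entry_eq_succ_iff (j + 1) v
  simp only [inC, isBullet_slideState_top_iff h hv, isBullet_slideState_bottom_iff h,
    inShape_pair_one_iff, slideState, appearsRow_succ_iff]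
  split_ifs <;> omega

theorem substep_slideState_top (h : TeeterBeforeBalance T jt jb) {v : ℕ} (hv : 1 ≤ v)
    (j : ℕ) :
    substep [l1, l2] (v + 1) (slideState T jt jb v) (0, j) =
      slideState T jt jb (v + 1) (0, j) := by
  simp only [substep, inC_slideState_top_iff h hv, inC_slideState_bottom_iff h hv,
    isBullet_slideState_top_iff h hv, slideState, appearsRow_succ_iff]
  rcases lt_or_ge v jb with hvjb | hjbv
  · rw [min_eq_left hvjb.le, min_eq_left hvjb]
    have := h.jt_lt_jb
    have := h.one_le_cnt_one hv
    have := T.cnt_one_le (v + 1)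
    have : A v ≤ A (v + 1) := cnt_mono v.le_succ
    have : A (v + 1) ≤ A v + 1 := cnt_succ_le
    have : B v ≤ B (v + 1) := cnt_mono v.le_succ
    have : B (v + 1) ≤ B v + 1 := cnt_succ_le
    have : B v < A v := h.cnt_two_lt_cnt_one v hv hvjb
    have : v + 1 < jb → B (v + 1) < A (v + 1) := h.cnt_two_lt_cnt_one (v + 1) (by omega)
    have : v + 1 = jb → A (v + 1) = A v := by
      rintro hjb; exact cnt_succ_of_not_appearsRow (hjb ▸ h.not_appearsRow_one_jb)
    have : v + 1 = jb → B (v + 1) = B v + 1 := by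
      rintro hjb; exact cnt_succ_of_appearsRow (hjb ▸ h.appearsRow_two_jb)
    have : v + 1 = jb → A (v + 1) = B (v + 1) := by rintro rfl; exact h.balance
    have := T.top_entry_eq_succ_iff j v
    have := T.top_entry_eq_succ_iff (j + 1) v
    have := fun hj : j < l1 => T.top_entry_pos hj
    split_ifs <;> omega
  · rw [min_eq_right hjbv, min_eq_right (hjbv.trans v.le_succ)]
    split_ifs <;> omega

theorem substep_slideState_bottom (h : TeeterBeforeBalance T jt jb) {v : ℕ} (hv : 1 ≤ v)
    (j : ℕ) :
    substep [l1, l2] (v + 1) (slideState T jt jb v) (1, j) =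
      slideState T jt jb (v + 1) (1, j) := by
  have := h.one_le_cnt_two_jt
  have := T.cnt_two_le (v + 1)
  have : B v ≤ B (v + 1) := cnt_mono v.le_succ
  have : B (v + 1) ≤ B v + 1 := cnt_succ_le
  have : jt ≤ v → B jt ≤ B v := fun hjt => cnt_mono hjt
  have : v + 1 = jt → B jt = B v + 1 := by
    rintro rfl; exact cnt_succ_of_appearsRow h.teeter.2.1
  have := T.bottom_entry_eq_succ_iff j v
  have := T.bottom_entry_eq_succ_iff (j + 1) v
  have := fun hj : j < l2 => T.bottom_entry_pos hj
  simp only [substep, inC_slideState_bottom_iff h hv, isBullet_slideState_bottom_iff h,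
    not_inC_pair le_rfl, or_false, slideState, appearsRow_succ_iff]
  split_ifs <;> omega

theorem substep_slideState (h : TeeterBeforeBalance T jt jb) {v : ℕ} (hv : 1 ≤ v) :
    substep [l1, l2] (v + 1) (slideState T jt jb v) = slideState T jt jb (v + 1) := by
  funext ⟨i, j⟩
  match i with
  | 0 => exact substep_slideState_top h hv j
  | 1 => exact substep_slideState_bottom h hv j
  | i + 2 =>
    rw [substep, if_neg (not_inC_pair (by omega)),
      if_neg fun hc => not_isBullet_pair (by omega) hc.1]
    rfl

theorem cyc_one_of_lt {q v : ℕ} (hv : v < q) : cyc q 1 v = v + 1 := by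
  rw [cyc, Nat.sub_self, zero_add, Nat.mod_eq_of_lt hv]

theorem iterSub_eq_slideState (h : TeeterBeforeBalance T jt jb) {v : ℕ} (hv : 1 ≤ v)
    (hvq : v ≤ q) : iterSub [l1, l2] q 1 T.entry (v - 1) = slideState T jt jb v := by
  induction v, hv using Nat.le_induction with
  | base =>
    rw [Nat.sub_self]
    funext ⟨i, j⟩
    match i, j with
    | 0, 0 =>
      simp [iterSub, slideState, h.entry_zero_zero, min_eq_left h.one_lt_jb.le, h.cnt_one_one,
        h.one_lt_jb]
    | 0, j + 1 => simp [iterSub, slideState, min_eq_left h.one_lt_jb.le, h.cnt_one_one]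
    | 1, j => simp [iterSub, slideState, show 1 < jt from h.two_le_jt]
    | i + 2, j => simp [iterSub, slideState]
  | succ v hv ih =>
    rw [Nat.add_sub_cancel, ← Nat.sub_add_cancel hv, iterSub, Nat.sub_add_cancel hv,
      cyc_one_of_lt (by omega), ih (by omega), substep_slideState h hv]

theorem slideState_final_top (h : TeeterBeforeBalance T jt jb) (j : ℕ) :
    slideState T jt jb q (0, j) =
      if j + 1 < A jb then T.entry (0, j + 1)
      else if j + 1 = A jb then jb
      else T.entry (0, j) := by
  simp [slideState, min_eq_right h.jb_le, not_lt.mpr h.jb_le]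

theorem slideState_final_bottom (h : TeeterBeforeBalance T jt jb) (j : ℕ) :
    slideState T jt jb q (1, j) =
      if j + 1 < B jt then T.entry (1, j)
      else if j + 1 < B q then T.entry (1, j + 1)
      else if j + 1 = B q then 0
      else T.entry (1, j) := by
  simp [slideState, not_lt.mpr (h.jt_lt_jb.le.trans h.jb_le)]

theorem kpromote_top (h : TeeterBeforeBalance T jt jb) {j : ℕ} (hj : j < l1) :
    kpromote [l1, l2] q T.entry (0, j) + 1 = slideState T jt jb q (0, j) := by
  have := h.one_le_cnt_one h.one_lt_jb.le
  have := T.cnt_one_le jb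
  have := h.one_lt_jb
  have := h.jb_le
  have : j + 1 < l1 → 1 < T.entry (0, j + 1) := fun hj' =>
    T.one_lt_entry h.shape_le (by simpa using hj') (by simp)
  have : 0 < j → 1 < T.entry (0, j) := fun hj0 =>
    T.one_lt_entry h.shape_le (by simpa using hj) (by simp; omega)
  simp only [kpromote, gromote, iterSub_eq_slideState h (by omega) le_rfl,
    slideState_final_top h, inShape_pair_zero_iff, hj, true_and, if_true]
  split_ifs <;> omega

theorem kpromote_bottom (h : TeeterBeforeBalance T jt jb) {j : ℕ} (hj : j < l2) :
    kpromote [l1, l2] q T.entry (1, j) =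
      if j + 1 = B q then q else slideState T jt jb q (1, j) - 1 := by
  have := h.one_lt_jb
  have := h.jb_le
  have := h.one_le_cnt_two_jt
  have : B jt ≤ B q := cnt_mono (h.jt_lt_jb.le.trans h.jb_le)
  have := T.cnt_two_le q
  have := T.one_lt_entry h.shape_le (c := (1, j)) (by simpa using hj) (by simp)
  have : j + 1 < l2 → 1 < T.entry (1, j + 1) := fun hj' =>
    T.one_lt_entry h.shape_le (by simpa using hj') (by simp)
  simp only [kpromote, gromote, iterSub_eq_slideState h (by omega) le_rfl,
    slideState_final_bottom h, inShape_pair_one_iff, hj, true_and, if_true]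
  split_ifs <;> omega

theorem appearsRow_kpromote_one_iff (h : TeeterBeforeBalance T jt jb) {m : ℕ} (hm : 1 ≤ m) :
    appearsRow [l1, l2] (kpromote [l1, l2] q T.entry) 1 m ↔
      m + 1 = jb ∨ appearsRow [l1, l2] T.entry 1 (m + 1) := by
  have := h.one_le_cnt_one h.one_lt_jb.le
  have := T.cnt_one_le jb
  simp only [appearsRow_pair_one_iff]
  constructor
  · rintro ⟨j, hj, rfl⟩
    have hval := kpromote_top h hj
    rw [slideState_final_top h] at hval
    split_ifs at hval
    · exact Or.inr ⟨j + 1, by omega, hval.symm⟩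
    · exact Or.inl hval
    · exact Or.inr ⟨j, hj, hval.symm⟩
  · rintro (hjb | ⟨j, hj, hval⟩)
    · refine ⟨A jb - 1, by omega, ?_⟩
      have := kpromote_top h (j := A jb - 1) (by omega)
      rw [slideState_final_top h, if_neg (by omega), if_pos (by omega)] at this
      omega
    · have hj0 : 0 < j := Nat.pos_of_ne_zero fun hj0 => by
        subst hj0; rw [h.entry_zero_zero] at hval; omega
      by_cases hjA : j < A jb
      · refine ⟨j - 1, by omega, ?_⟩
        have := kpromote_top h (j := j - 1) (by omega)
        rw [slideState_final_top h, if_pos (by omega), Nat.sub_add_cancel hj0] at this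
        omega
      · refine ⟨j, hj, ?_⟩
        have := kpromote_top h hj
        rw [slideState_final_top h, if_neg (by omega), if_neg (by omega)] at this
        omega

theorem appearsRow_kpromote_two_iff (h : TeeterBeforeBalance T jt jb) {m : ℕ} (hmq : m < q) :
    appearsRow [l1, l2] (kpromote [l1, l2] q T.entry) 2 m ↔
      appearsRow [l1, l2] T.entry 2 (m + 1) ∧ m + 1 ≠ jt := by
  have := h.one_le_cnt_two_jt
  have : B jt ≤ B q := cnt_mono (h.jt_lt_jb.le.trans h.jb_le)
  have : B m ≤ B (m + 1) := cnt_mono m.le_succ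
  have : B (m + 1) ≤ B m + 1 := cnt_succ_le
  have : B (m + 1) ≤ B q := cnt_mono hmq
  have := T.cnt_two_le q
  have : m + 1 = jt → B (m + 1) = B jt := by rintro rfl; rfl
  have : m + 1 < jt → B (m + 1) < B jt := h.cnt_two_lt_cnt_two_jt
  have : jt < m + 1 → B jt ≤ B m := fun hjt => cnt_mono (by omega)
  simp only [appearsRow_pair_two_iff]
  constructor
  · rintro ⟨j, hj, hkp⟩
    have := T.bottom_entry_eq_succ_iff j m
    have := T.bottom_entry_eq_succ_iff (j + 1) m
    have := T.bottom_entry_pos hj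
    have : j + 1 < l2 → 0 < T.entry (1, j + 1) := T.bottom_entry_pos
    have hval := kpromote_bottom h hj
    rw [hkp, slideState_final_bottom h] at hval
    split_ifs at hval
    · omega
    · exact ⟨⟨j, hj, by omega⟩, by omega⟩
    · exact ⟨⟨j + 1, by omega, by omega⟩, by omega⟩
    · exact ⟨⟨j, hj, by omega⟩, by omega⟩
  · rintro ⟨⟨j, hj, hval⟩, hjt⟩
    have := (T.bottom_entry_eq_succ_iff j m).mp hval
    by_cases hjB : j + 1 < B jt
    · refine ⟨j, hj, ?_⟩
      rw [kpromote_bottom h hj, slideState_final_bottom h, if_neg (by omega), if_pos hjB]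
      omega
    · refine ⟨j - 1, by omega, ?_⟩
      rw [kpromote_bottom h (by omega), slideState_final_bottom h, if_neg (by omega),
        if_neg (by omega), if_pos (by omega), Nat.sub_add_cancel (by omega)]
      omega

theorem not_appearsRow_kpromote_one_q (h : TeeterBeforeBalance T jt jb) :
    ¬ appearsRow [l1, l2] (kpromote [l1, l2] q T.entry) 1 q := by
  rw [appearsRow_pair_one_iff]
  rintro ⟨j, hj, hkp⟩
  have := h.jb_le
  have := T.cnt_one_le jb
  have : j + 1 < l1 → T.entry (0, j + 1) ≤ q := fun hj' => T.entry_le _ (by simpa using hj')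
  have := T.entry_le (0, j) (by simpa using hj)
  have hval := kpromote_top h hj
  rw [hkp, slideState_final_top h] at hval
  split_ifs at hval <;> omega

theorem appearsRow_kpromote_two_q (h : TeeterBeforeBalance T jt jb) :
    appearsRow [l1, l2] (kpromote [l1, l2] q T.entry) 2 q := by
  have := h.one_le_cnt_two_jt
  have : B jt ≤ B q := cnt_mono (h.jt_lt_jb.le.trans h.jb_le)
  have := T.cnt_two_le q
  refine appearsRow_pair_two_iff.mpr ⟨B q - 1, by omega, ?_⟩
  rw [kpromote_bottom h (by omega), if_pos (by omega)]

theorem TeeterBeforeBalance.rowSetW_jt (h : TeeterBeforeBalance T jt jb) :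
    rowSetW [l1, l2] T.entry jt = {1, 2} :=
  rowSetW_pair_eq subset_rfl (iff_of_true h.teeter.1 (by simp))
    (iff_of_true h.teeter.2.1 (by simp))

theorem TeeterBeforeBalance.rowSetW_jb (h : TeeterBeforeBalance T jt jb) :
    rowSetW [l1, l2] T.entry jb = {2} :=
  rowSetW_pair_eq (by simp) (iff_of_false h.not_appearsRow_one_jb (by simp))
    (iff_of_true h.appearsRow_two_jb (by simp))

theorem TeeterBeforeBalance.rowSetW_kpromote (h : TeeterBeforeBalance T jt jb) {m : ℕ}
    (hm : 1 ≤ m) (hmq : m < q) :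
    rowSetW [l1, l2] (kpromote [l1, l2] q T.entry) m =
      if m + 1 = jt then {1}
      else if m + 1 = jb then {1, 2}
      else rowSetW [l1, l2] T.entry (m + 1) := by
  have hkp1 := appearsRow_kpromote_one_iff h hm
  have hkp2 := appearsRow_kpromote_two_iff h hmq
  split_ifs with ht hb
  · exact rowSetW_pair_eq (by simp) (hkp1.trans (iff_of_true (Or.inr (ht ▸ h.teeter.1)) rfl))
      (hkp2.trans (iff_of_false (fun h' => h'.2 ht) (by simp)))
  · exact rowSetW_pair_eq subset_rfl (hkp1.trans (iff_of_true (Or.inl hb) (by simp)))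
      (hkp2.trans (iff_of_true ⟨hb ▸ h.appearsRow_two_jb, ht⟩ (by simp)))
  · exact rowSetW_pair_eq rowSetW_pair_subset (hkp1.trans (or_iff_right hb))
      (hkp2.trans (and_iff_left ht))

theorem TeeterBeforeBalance.rowSetW_kpromote_q (h : TeeterBeforeBalance T jt jb) :
    rowSetW [l1, l2] (kpromote [l1, l2] q T.entry) q = {2} :=
  rowSetW_pair_eq (by simp) (iff_of_false (not_appearsRow_kpromote_one_q h) (by simp))
    (iff_of_true (appearsRow_kpromote_two_q h) (by simp))

end Promotion

theorem two_row_Kpromotion_balance_with_teeter_general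
    (l1 l2 q : ℕ) (hll : l2 ≤ l1) (T : IncTab [l1, l2] q)
    (hw1 : rowSetW [l1, l2] T.entry 1 ≠ (∅ : Set ℕ))
    (jb jt : ℕ) (hjbq : jb ≤ q)
    (hbal : isBalance [l1, l2] T.entry jb)
    (hfirstb : ∀ m, 1 ≤ m → m < jb → ¬ isBalance [l1, l2] T.entry m)
    (hjt1 : 1 ≤ jt) (hjtb : jt < jb)
    (hteet : isTeeter [l1, l2] T.entry jt)
    (hfirstt : ∀ m, 1 ≤ m → m < jt → ¬ isTeeter [l1, l2] T.entry m) :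
    rowSetW [l1, l2] T.entry jt = ({1, 2} : Set ℕ) ∧
    rowSetW [l1, l2] T.entry jb = ({2} : Set ℕ) ∧
    (∀ m, 1 ≤ m → m < q →
      rowSetW [l1, l2] (kpromote [l1, l2] q T.entry) m =
        (if m + 1 = jt then ({1} : Set ℕ)
         else if m + 1 = jb then ({1, 2} : Set ℕ)
         else rowSetW [l1, l2] T.entry (m + 1))) ∧
    rowSetW [l1, l2] (kpromote [l1, l2] q T.entry) q = ({2} : Set ℕ) := by
  have h : TeeterBeforeBalance T jt jb :=
    { shape_le := hll
      entry_zero_zero := T.entry_zero_zero_eq_one hll hw1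
      one_le_jt := hjt1
      jt_lt_jb := hjtb
      jb_le := hjbq
      teeter := hteet
      not_teeter := hfirstt
      balance := hbal
      cnt_two_lt_cnt_one := fun m hm hmb =>
        (T.cnt_two_le_cnt_one hll m).lt_of_ne fun he => hfirstb m hm hmb he.symm }
  exact ⟨h.rowSetW_jt, h.rowSetW_jb, fun m hm hmq => h.rowSetW_kpromote hm hmq,
    h.rowSetW_kpromote_q⟩

/-- two-row K-promotion, case of a first balance point `j_b` preceded by
a first teetering point `j_t`: the new lattice word changes `w_{j_t}` from `{1,2}` to
`{1}`, changes `w_{j_b}` from `{2}` to `{1,2}`, deletes the first letter, and appends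
`{2}`. -/
theorem two_row_Kpromotion_balance_with_teeter
    (l1 l2 q : ℕ) (hll : l2 ≤ l1) (T : IncTab [l1, l2] q)
    (hw1 : rowSetW [l1, l2] T.entry 1 ≠ (∅ : Set ℕ))
    (jb jt : ℕ) (hjb1 : 1 ≤ jb) (hjbq : jb ≤ q)
    (hbal : isBalance [l1, l2] T.entry jb)
    (hfirstb : ∀ m, 1 ≤ m → m < jb → ¬ isBalance [l1, l2] T.entry m)
    (hjt1 : 1 ≤ jt) (hjtb : jt < jb)
    (hteet : isTeeter [l1, l2] T.entry jt)
    (hfirstt : ∀ m, 1 ≤ m → m < jt → ¬ isTeeter [l1, l2] T.entry m) :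
    rowSetW [l1, l2] T.entry jt = ({1, 2} : Set ℕ) ∧
    rowSetW [l1, l2] T.entry jb = ({2} : Set ℕ) ∧
    (∀ m, 1 ≤ m → m < q →
      rowSetW [l1, l2] (kpromote [l1, l2] q T.entry) m =
        (if m + 1 = jt then ({1} : Set ℕ)
         else if m + 1 = jb then ({1, 2} : Set ℕ)
         else rowSetW [l1, l2] T.entry (m + 1))) ∧
    rowSetW [l1, l2] (kpromote [l1, l2] q T.entry) q = ({2} : Set ℕ) :=
  two_row_Kpromotion_balance_with_teeter_general l1 l2 q hll T hw1 jb jt hjbq hbal hfirstb hjt1 hjtb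
    hteet hfirstt
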